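/- (Down-step contiguity for the series solution.) For each k with 1 ≤ k ≤ n and every point x ∈ U₀, ∂F(α;x)/∂x_{1k} = α_k · F(α − e_k; x), where F(α − e_k; ·) denotes the series F built from the shifted parameter vector in which α_k is replaced by α_k − 1 (with the same γ), and e_k is the k-th standard unit vector. -/

import Mathlib

open Complex Function Polynomial

/-- Partial derivative of `f` with respect to the coordinate `p`. -/
noncomputable def pd {n : ℕ} (p : Fin 2 × Fin n)
    (f : ((Fin 2 × Fin n) → ℝ) → ℂ) (x : (Fin 2 × Fin n) → ℝ) : ℂ :=
  deriv (fun s : ℝ => f (Function.update x p s)) (x p)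

/-- The coefficient
`c_m = (−1)^{|m|} (∏ₖ (−α_k)_{m_k}) (b^{γ+|m|+1} − a^{γ+|m|+1}) / ((γ+|m|+1) ∏ₖ m_k!)`,
where `(z)_j` is the Pochhammer symbol. -/
noncomputable def cm {n : ℕ} (α : Fin n → ℂ) (γ : ℂ) (a b : ℝ)
    (m : Fin n → ℕ) : ℂ :=
  (-1 : ℂ) ^ (∑ k, m k) * (∏ k, (ascPochhammer ℂ (m k)).eval (-(α k)))
    * ((b : ℂ) ^ (γ + ((∑ k, m k : ℕ) : ℂ) + 1)
        - (a : ℂ) ^ (γ + ((∑ k, m k : ℕ) : ℂ) + 1))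
    / ((γ + ((∑ k, m k : ℕ) : ℂ) + 1) * ∏ k, ((m k).factorial : ℂ))

/-- The series `F(x) = (∏ₖ x_{1k}^{α_k}) Σ_{m ∈ ℕⁿ} c_m ∏ₖ (x_{2k}/x_{1k})^{m_k}`;
the first row of `x` is indexed by `0 : Fin 2`, the second row by `1 : Fin 2`. -/
noncomputable def Fser {n : ℕ} (α : Fin n → ℂ) (γ : ℂ) (a b : ℝ)
    (x : (Fin 2 × Fin n) → ℝ) : ℂ :=
  (∏ k, (x (0, k) : ℂ) ^ (α k)) *
    ∑' m : Fin n → ℕ, cm α γ a b m * ∏ k, ((x (1, k) / x (0, k) : ℝ) : ℂ) ^ m k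

/-!
Along the coordinate `x_{1k}` the `m`-th term of `F(α; ·)` is a constant times
`x_{1k}^{α_k - m_k}`, so its derivative is `(α_k - m_k) / x_{1k}` times the term, and the
Pochhammer identity `(z)_j (z + j) = z (z + 1)_j` at `z = -α_k` turns `(α_k - m_k) c_m(α)` into
`α_k c_m(α - e_k)`. Termwise differentiation is justified by domination:
`|c_m| ≤ C ∏ₗ b^{m_l} (|α_l|)_{m_l} / m_l!`, so on `U₀` the series weighted by `m_k + 1` still
converges absolutely (ratio test in each variable), and the weighted series at a point with
smaller `x_{1k}` dominates the differentiated series near the original point.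
-/

open Filter Topology Finset Nat

section Pochhammer

variable {R : Type*}

theorem ascPochhammer_eval_mul_add [CommSemiring R] (z : R) (j : ℕ) :
    (ascPochhammer R j).eval z * (z + j) = z * (ascPochhammer R j).eval (z + 1) := by
  rw [← ascPochhammer_succ_eval, ascPochhammer_succ_left]
  simp [eval_comp]

theorem ascPochhammer_eval_nonneg [Semiring R] [PartialOrder R] [IsOrderedRing R] (j : ℕ)
    {r : R} (hr : 0 ≤ r) : 0 ≤ (ascPochhammer R j).eval r := by
  induction j with
  | zero => simp
  | succ j ih =>
    rw [ascPochhammer_succ_eval]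
    exact mul_nonneg ih (add_nonneg hr j.cast_nonneg)

theorem norm_ascPochhammer_eval_le [NormedCommRing R] [NormOneClass R] (z : R) (j : ℕ) :
    ‖(ascPochhammer R j).eval z‖ ≤ (ascPochhammer ℝ j).eval ‖z‖ := by
  induction j with
  | zero => simp
  | succ j ih =>
    rw [ascPochhammer_succ_eval, ascPochhammer_succ_eval]
    refine (norm_mul_le _ _).trans (mul_le_mul ih ?_ (norm_nonneg _)
      (ascPochhammer_eval_nonneg j (norm_nonneg z)))
    exact (norm_add_le _ _).trans (by simpa using Nat.norm_cast_le (α := R) j)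

end Pochhammer

theorem summable_succ_mul_ascPochhammer_div_factorial_mul_pow {r ρ : ℝ} (hr : 0 ≤ r)
    (hρ0 : 0 ≤ ρ) (hρ1 : ρ < 1) :
    Summable fun j : ℕ => (j + 1) * (ascPochhammer ℝ j).eval r / j ! * ρ ^ j := by
  set f : ℕ → ℝ := fun j => (j + 1) * (ascPochhammer ℝ j).eval r / j ! * ρ ^ j
  set ratio : ℕ → ℝ := fun j => (2 + j) / (1 + j) * ((r + j) / (1 + j)) * ρ
  have hf : ∀ j, f (j + 1) = ratio j * f j := by
    intro j
    simp only [f, ratio, ascPochhammer_succ_eval, factorial_succ]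
    push_cast
    field_simp
    ring
  have hratio : Tendsto ratio atTop (𝓝 ρ) := by
    simpa [ratio] using ((tendsto_add_mul_div_add_mul_atTop_nhds 2 1 1 one_ne_zero).mul
      (tendsto_add_mul_div_add_mul_atTop_nhds r 1 1 one_ne_zero)).mul_const ρ
  have hf0 : ∀ j, 0 ≤ f j := fun j => by
    have := ascPochhammer_eval_nonneg j hr
    positivity
  refine summable_of_ratio_norm_eventually_le (r := (1 + ρ) / 2) (by linarith) ?_
  filter_upwards [hratio.eventually (gt_mem_nhds (show ρ < (1 + ρ) / 2 by linarith))] with j hj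
  rw [Real.norm_of_nonneg (hf0 _), Real.norm_of_nonneg (hf0 _), hf]
  exact mul_le_mul_of_nonneg_right hj.le (hf0 j)

theorem summable_prod_apply_of_nonneg {ι κ : Type*} [Fintype ι] {v : ι → κ → ℝ}
    (hv : ∀ l j, 0 ≤ v l j) (hs : ∀ l, Summable (v l)) :
    Summable fun m : ι → κ => ∏ l, v l (m l) := by
  classical
  refine summable_of_sum_le (c := ∏ l, ∑' j, v l j)
    (fun m => prod_nonneg fun l _ => hv l (m l)) fun F => ?_
  calc ∑ m ∈ F, ∏ l, v l (m l)
      ≤ ∑ m ∈ Fintype.piFinset fun l => F.image (· l), ∏ l, v l (m l) :=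
        sum_le_sum_of_subset_of_nonneg
          (fun m hm => Fintype.mem_piFinset.2 fun l => mem_image_of_mem _ hm)
          fun m _ _ => prod_nonneg fun l _ => hv l (m l)
    _ = ∏ l, ∑ j ∈ F.image (· l), v l j := (prod_univ_sum _ _).symm
    _ ≤ ∏ l, ∑' j, v l j :=
        prod_le_prod (fun l _ => sum_nonneg fun j _ => hv l j)
          fun l _ => (hs l).sum_le_tsum _ fun j _ => hv l j

theorem hasDerivAt_tsum_mul_cpow_sub_natCast {ι : Type*} (B : ι → ℂ) (e : ι → ℕ) (β : ℂ)
    {c s₀ : ℝ} (hc : 0 < c) (hcs : c < s₀)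
    (hB : Summable fun i => ((e i : ℝ) + 1) * ‖B i * (c : ℂ) ^ (β - e i)‖) :
    HasDerivAt (fun s : ℝ => ∑' i, B i * (s : ℂ) ^ (β - e i))
      (∑' i, B i * ((β - e i) * (s₀ : ℂ) ^ (β - e i - 1))) s₀ := by
  have hnorm : ∀ {s : ℝ}, 0 < s → ∀ (w : ℂ) i, ‖B i * (s : ℂ) ^ (w - e i)‖
      = ‖(s : ℂ) ^ w‖ * (‖B i‖ / s ^ e i) := fun {s} hs w i => by
    rw [Complex.cpow_sub _ _ (Complex.ofReal_ne_zero.2 hs.ne'), Complex.cpow_natCast, norm_mul,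
      norm_div, norm_pow, Complex.norm_real, Real.norm_of_nonneg hs.le]
    ring
  set u : ι → ℝ := fun i => ((e i : ℝ) + 1) * (‖B i‖ / c ^ e i)
  have hu : Summable u := by
    have hcβ : ‖(c : ℂ) ^ β‖ ≠ 0 := by
      rw [Complex.norm_cpow_eq_rpow_re_of_pos hc]
      exact (Real.rpow_pos_of_pos hc _).ne'
    refine (hB.div_const ‖(c : ℂ) ^ β‖).congr fun i => ?_
    rw [hnorm hc]
    simp only [u]
    field_simp
  obtain ⟨M, hM⟩ := (isCompact_Icc (a := c) (b := s₀ + 1)).exists_bound_of_continuousOn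
    (f := fun s : ℝ => (s : ℂ) ^ (β - 1)) fun s hs => ContinuousAt.continuousWithinAt <|
      Complex.continuousAt_ofReal_cpow_const s _ (Or.inr (hc.trans_le hs.1).ne')
  refine hasDerivAt_tsum_of_isPreconnected (𝕜 := ℝ) (t := Set.Ioo c (s₀ + 1)) (y₀ := s₀)
    (g := fun i s => B i * (s : ℂ) ^ (β - e i))
    (g' := fun i s => B i * ((β - e i) * (s : ℂ) ^ (β - e i - 1)))
    (u := fun i => (‖β‖ + 1) * M * u i) (hu.mul_left _) isOpen_Ioo isPreconnected_Ioo
    (fun i s hs => ?_) (fun i s hs => ?_) ⟨hcs, lt_add_one s₀⟩ ?_ ⟨hcs, lt_add_one s₀⟩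
  · have hs : 0 < s := hc.trans hs.1
    exact ((Complex.hasStrictDerivAt_cpow_const (Complex.ofReal_mem_slitPlane.2 hs)).hasDerivAt
      |>.comp_ofReal).const_mul (B i)
  · have hs0 : 0 < s := hc.trans hs.1
    have hβ : ‖β - e i‖ ≤ (‖β‖ + 1) * ((e i : ℝ) + 1) := by
      refine (norm_sub_le _ _).trans ?_
      rw [Complex.norm_natCast]
      nlinarith [norm_nonneg β, (e i).cast_nonneg (α := ℝ)]
    rw [mul_left_comm, norm_mul, sub_right_comm, hnorm hs0]
    calc ‖β - e i‖ * (‖(s : ℂ) ^ (β - 1)‖ * (‖B i‖ / s ^ e i))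
        ≤ (‖β‖ + 1) * ((e i : ℝ) + 1) * (M * (‖B i‖ / c ^ e i)) := by
          have hMs := hM s (Set.Ioo_subset_Icc_self hs)
          have hM0 : 0 ≤ M := (norm_nonneg _).trans hMs
          gcongr
          exact hs.1.le
      _ = (‖β‖ + 1) * M * u i := by ring
  · refine .of_norm_bounded (hu.mul_left ‖(s₀ : ℂ) ^ β‖) fun i => ?_
    rw [hnorm (hc.trans hcs)]
    gcongr
    calc ‖B i‖ / s₀ ^ e i ≤ ‖B i‖ / c ^ e i := by gcongr
      _ ≤ u i := le_mul_of_one_le_left (by positivity) (by simp)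

theorem exists_norm_inv_add_natCast_le {𝕜 : Type*} [RCLike 𝕜] (z : 𝕜) :
    ∃ C, ∀ j : ℕ, ‖(z + j)⁻¹‖ ≤ C := by
  have hnorm : Tendsto (fun j : ℕ => ‖z + j‖) atTop atTop := by
    refine tendsto_atTop_mono (fun j => ?_)
      (tendsto_atTop_add_const_right _ (-‖z‖) tendsto_natCast_atTop_atTop)
    have := norm_sub_norm_le (j : 𝕜) (-z)
    rw [RCLike.norm_natCast, norm_neg, sub_neg_eq_add, add_comm] at this
    linarith
  obtain ⟨C, hC⟩ := hnorm.inv_tendsto_atTop.bddAbove_range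
  exact ⟨C, fun j => by simpa using hC (Set.mem_range_self j)⟩

theorem norm_ofReal_cpow_add_natCast_sub_le {a b : ℝ} (ha : 0 < a) (hab : a ≤ b) (w : ℂ)
    (s : ℕ) : ‖(b : ℂ) ^ (w + s) - (a : ℂ) ^ (w + s)‖ ≤ (b ^ w.re + a ^ w.re) * b ^ s := by
  have hb : 0 < b := ha.trans_le hab
  have hre : (w + s).re = w.re + s := by simp
  have has : a ^ s ≤ b ^ s := pow_le_pow_left₀ ha.le hab s
  refine (norm_sub_le _ _).trans ?_
  rw [Complex.norm_cpow_eq_rpow_re_of_pos hb, Complex.norm_cpow_eq_rpow_re_of_pos ha, hre,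
    Real.rpow_add hb, Real.rpow_add ha, Real.rpow_natCast, Real.rpow_natCast]
  nlinarith [Real.rpow_pos_of_pos ha w.re]

theorem exists_norm_cm_le {n : ℕ} (α : Fin n → ℂ) (γ : ℂ) {a b : ℝ} (ha : 0 < a) (hab : a ≤ b) :
    ∃ C, 0 ≤ C ∧ ∀ m : Fin n → ℕ,
      ‖cm α γ a b m‖ ≤ C * ∏ l, (ascPochhammer ℝ (m l)).eval ‖α l‖ / (m l)! * b ^ m l := by
  have hb : 0 < b := ha.trans_le hab
  obtain ⟨C, hC⟩ := exists_norm_inv_add_natCast_le (γ + 1)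
  refine ⟨max C 0 * (b ^ (γ + 1).re + a ^ (γ + 1).re), by positivity, fun m => ?_⟩
  set s := ∑ l, m l
  set P := ∏ l, (ascPochhammer ℝ (m l)).eval ‖α l‖
  have hP : ‖∏ l, (ascPochhammer ℂ (m l)).eval (-α l)‖ ≤ P := by
    rw [norm_prod]
    exact prod_le_prod (fun _ _ => norm_nonneg _)
      fun l _ => by simpa using norm_ascPochhammer_eval_le (-α l) (m l)
  have hD := norm_ofReal_cpow_add_natCast_sub_le ha hab (γ + 1) s
  have hE : ‖(γ + 1 + s)⁻¹‖ ≤ max C 0 := (hC s).trans (le_max_left _ _)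
  have hF : ‖∏ l, ((m l)! : ℂ)‖ = ∏ l, ((m l)! : ℝ) := by simp [norm_prod]
  have hrhs : ∏ l, (ascPochhammer ℝ (m l)).eval ‖α l‖ / (m l)! * b ^ m l
      = P * b ^ s / ∏ l, ((m l)! : ℝ) := by
    rw [prod_mul_distrib, prod_div_distrib, prod_pow_eq_pow_sum]
    ring
  rw [cm, show γ + ((s : ℕ) : ℂ) + 1 = γ + 1 + s by ring, hrhs, norm_div, norm_mul, norm_mul,
    norm_mul, hF, norm_pow, norm_neg, norm_one, one_pow, one_mul, div_eq_mul_inv, div_eq_mul_inv,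
    mul_inv, ← norm_inv]
  have hP0 : 0 ≤ P := prod_nonneg fun l _ => ascPochhammer_eval_nonneg (m l) (norm_nonneg (α l))
  calc _ ≤ P * ((b ^ (γ + 1).re + a ^ (γ + 1).re) * b ^ s) * (max C 0 * (∏ l, ((m l)! : ℝ))⁻¹) := by
        gcongr
    _ = _ := by ring

section Fterm

variable {n : ℕ} (α : Fin n → ℂ) (γ : ℂ) (a b : ℝ)

noncomputable def Fterm (m : Fin n → ℕ) (x : (Fin 2 × Fin n) → ℝ) : ℂ :=
  cm α γ a b m * ∏ l, (x (0, l) : ℂ) ^ α l * ((x (1, l) / x (0, l) : ℝ) : ℂ) ^ m l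

theorem Fser_eq_tsum_Fterm (x : (Fin 2 × Fin n) → ℝ) :
    Fser α γ a b x = ∑' m, Fterm α γ a b m x := by
  rw [Fser, ← tsum_mul_left]
  congr 1 with m
  rw [Fterm, prod_mul_distrib]
  ring

theorem norm_Fterm {x : (Fin 2 × Fin n) → ℝ} (hx : ∀ p, 0 < x p) (m : Fin n → ℕ) :
    ‖Fterm α γ a b m x‖
      = ‖cm α γ a b m‖ * ∏ l, x (0, l) ^ (α l).re * (x (1, l) / x (0, l)) ^ m l := by
  rw [Fterm, norm_mul, norm_prod]
  congr 1
  refine prod_congr rfl fun l _ => ?_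
  rw [norm_mul, Complex.norm_cpow_eq_rpow_re_of_pos (hx _), norm_pow, Complex.norm_real,
    Real.norm_of_nonneg (div_pos (hx _) (hx _)).le]

theorem summable_mul_norm_Fterm (ha : 0 < a) (hab : a ≤ b) (k : Fin n)
    {x : (Fin 2 × Fin n) → ℝ} (hx : ∀ p, 0 < x p) (hU : ∀ l, x (1, l) * b < x (0, l)) :
    Summable fun m => ((m k : ℝ) + 1) * ‖Fterm α γ a b m x‖ := by
  have hb : 0 < b := ha.trans_le hab
  obtain ⟨C, hC0, hC⟩ := exists_norm_cm_le α γ ha hab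
  set q : Fin n → ℝ := fun l => x (1, l) / x (0, l)
  have hq0 : ∀ l, 0 ≤ q l := fun l => (div_pos (hx _) (hx _)).le
  have hbq : ∀ l, b * q l < 1 := fun l => by
    rw [mul_div_assoc', div_lt_one (hx _), mul_comm]
    exact hU l
  set V : Fin n → ℕ → ℝ := fun l j =>
    x (0, l) ^ (α l).re * ((j + 1) * (ascPochhammer ℝ j).eval ‖α l‖ / j ! * (b * q l) ^ j)
  have hV0 : ∀ l j, 0 ≤ V l j := fun l j => by
    have := ascPochhammer_eval_nonneg j (norm_nonneg (α l))
    have := hq0 l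
    have := hx (0, l)
    positivity
  have hV : Summable fun m : Fin n → ℕ => ∏ l, V l (m l) :=
    summable_prod_apply_of_nonneg hV0 fun l =>
      (summable_succ_mul_ascPochhammer_div_factorial_mul_pow (norm_nonneg _)
        (mul_nonneg hb.le (hq0 l)) (hbq l)).mul_left _
  refine (hV.mul_left C).of_nonneg_of_le (fun m => by positivity) fun m => ?_
  have hmk : (m k : ℝ) + 1 ≤ ∏ l, ((m l : ℝ) + 1) := by
    exact_mod_cast Nat.le_of_dvd (prod_pos fun l _ => Nat.succ_pos _)
      (dvd_prod_of_mem (fun l => m l + 1) (mem_univ k))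
  rw [norm_Fterm α γ a b hx]
  calc ((m k : ℝ) + 1) * (‖cm α γ a b m‖ * ∏ l, x (0, l) ^ (α l).re * q l ^ m l)
      ≤ (∏ l, ((m l : ℝ) + 1)) * ((C * ∏ l, (ascPochhammer ℝ (m l)).eval ‖α l‖ / (m l)! * b ^ m l)
          * ∏ l, x (0, l) ^ (α l).re * q l ^ m l) := by
        have hw0 := prod_nonneg fun l (_ : l ∈ univ) =>
          mul_nonneg (Real.rpow_nonneg (hx (0, l)).le (α l).re) (pow_nonneg (hq0 l) (m l))
        gcongr
        exact hC m
    _ = C * ∏ l, V l (m l) := by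
        simp only [V, mul_pow, prod_mul_distrib, prod_div_distrib]
        ring

theorem cm_update_sub_one_mul (k : Fin n) (m : Fin n → ℕ) :
    cm (update α k (α k - 1)) γ a b m * α k = cm α γ a b m * (α k - m k) := by
  have hP : (∏ l, (ascPochhammer ℂ (m l)).eval (-update α k (α k - 1) l)) * α k
      = (∏ l, (ascPochhammer ℂ (m l)).eval (-α l)) * (α k - m k) := by
    have key := ascPochhammer_eval_mul_add (-α k) (m k)
    rw [show -α k + 1 = -(α k - 1) by ring] at key
    rw [← mul_prod_erase univ _ (mem_univ k), ← mul_prod_erase univ _ (mem_univ k), update_self,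
      prod_congr rfl fun l hl => by rw [update_of_ne (ne_of_mem_erase hl)]]
    linear_combination (∏ l ∈ univ.erase k, (ascPochhammer ℂ (m l)).eval (-α l)) * key
  simp only [cm]
  linear_combination (-1 : ℂ) ^ (∑ l, m l) * ((b : ℂ) ^ (γ + ((∑ l, m l : ℕ) : ℂ) + 1)
    - (a : ℂ) ^ (γ + ((∑ l, m l : ℕ) : ℂ) + 1))
    / ((γ + ((∑ l, m l : ℕ) : ℂ) + 1) * ∏ l, ((m l)! : ℂ)) * hP

theorem Fterm_update_zero_eq_mul_cpow (m : Fin n → ℕ) (x : (Fin 2 × Fin n) → ℝ) (k : Fin n)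
    {s : ℝ} (hs : s ≠ 0) :
    Fterm α γ a b m (update x (0, k) s)
      = Fterm α γ a b m (update x (0, k) 1) * (s : ℂ) ^ (α k - m k) := by
  have hsplit : ∀ v : ℝ, Fterm α γ a b m (update x (0, k) v)
      = cm α γ a b m * ((v : ℂ) ^ α k * ((x (1, k) / v : ℝ) : ℂ) ^ m k)
        * ∏ l ∈ univ.erase k, (x (0, l) : ℂ) ^ α l * ((x (1, l) / x (0, l) : ℝ) : ℂ) ^ m l := by
    intro v
    rw [Fterm, ← mul_prod_erase univ _ (mem_univ k), update_self, update_of_ne (by simp),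
      prod_congr rfl fun l hl => by
        have h0 : ((0, l) : Fin 2 × Fin n) ≠ (0, k) := by simpa using ne_of_mem_erase hl
        rw [update_of_ne h0, update_of_ne (by simp)]]
    ring
  rw [hsplit, hsplit, Complex.cpow_sub _ _ (Complex.ofReal_ne_zero.2 hs), Complex.cpow_natCast,
    Complex.ofReal_one, Complex.one_cpow]
  push_cast
  field_simp
  ring

theorem mul_Fterm_update_sub_one_of_eq_one (k : Fin n) (m : Fin n → ℕ)
    {x : (Fin 2 × Fin n) → ℝ} (hx : x (0, k) = 1) :
    α k * Fterm (update α k (α k - 1)) γ a b m x = (α k - m k) * Fterm α γ a b m x := by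
  have hprod : ∀ f : Fin n → ℂ, ∏ l, (x (0, l) : ℂ) ^ update α k (α k - 1) l * f l
      = ∏ l, (x (0, l) : ℂ) ^ α l * f l := fun f => prod_congr rfl fun l _ => by
    rcases eq_or_ne l k with rfl | hl
    · simp [hx]
    · rw [update_of_ne hl]
  rw [Fterm, Fterm, hprod, ← mul_assoc, mul_comm (α k), cm_update_sub_one_mul]
  ring

/-- By `Fterm_update_zero_eq_mul_cpow`, the right side is the derivative in `x (0, k)` of the
`m`-th term of `F(α; ·)`. -/
theorem mul_Fterm_update_sub_one (k : Fin n) (m : Fin n → ℕ) {x : (Fin 2 × Fin n) → ℝ}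
    (hx : x (0, k) ≠ 0) :
    α k * Fterm (update α k (α k - 1)) γ a b m x
      = Fterm α γ a b m (update x (0, k) 1) * ((α k - m k) * (x (0, k) : ℂ) ^ (α k - m k - 1)) := by
  conv_lhs => rw [← update_eq_self (0, k) x, Fterm_update_zero_eq_mul_cpow _ γ a b m x k hx,
    ← mul_assoc, mul_Fterm_update_sub_one_of_eq_one α γ a b k m (update_self _ _ _), update_self,
    sub_right_comm]
  ring

end Fterm

theorem stmt19_general {n : ℕ} (α : Fin n → ℂ) (γ : ℂ) (a b : ℝ)
    (ha : 0 < a) (hab : a < b)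
    (k : Fin n) (x : (Fin 2 × Fin n) → ℝ) (hx : ∀ p, 0 < x p)
    (hU : ∀ l, x (1, l) * b < x (0, l)) :
    pd (0, k) (Fser α γ a b) x
      = α k * Fser (Function.update α k (α k - 1)) γ a b x := by
  have hb : 0 < b := ha.trans hab
  obtain ⟨c, hcb, hcs⟩ := exists_between (hU k)
  have hc : 0 < c := lt_trans (by have := hx (1, k); positivity) hcb
  have hy : ∀ p, 0 < update x (0, k) c p := fun p => by
    rcases eq_or_ne p (0, k) with rfl | hp
    · simpa using hc
    · simpa [update_of_ne hp] using hx p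
  have hyU : ∀ l, update x (0, k) c (1, l) * b < update x (0, k) c (0, l) := fun l => by
    rcases eq_or_ne l k with rfl | hl
    · simpa using hcb
    · simpa [hl] using hU l
  have hderiv := hasDerivAt_tsum_mul_cpow_sub_natCast
    (fun m => Fterm α γ a b m (update x (0, k) 1)) (fun m => m k) (α k) hc hcs <|
      (summable_mul_norm_Fterm α γ a b ha hab.le k hy hyU).congr
      fun m => by rw [Fterm_update_zero_eq_mul_cpow α γ a b m x k hc.ne']
  have hF : (fun s => Fser α γ a b (update x (0, k) s)) =ᶠ[𝓝 (x (0, k))]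
      fun s => ∑' m, Fterm α γ a b m (update x (0, k) 1) * (s : ℂ) ^ (α k - m k) := by
    filter_upwards [lt_mem_nhds (hx (0, k))] with s hs
    simp only [Fser_eq_tsum_Fterm, Fterm_update_zero_eq_mul_cpow α γ a b _ x k hs.ne']
  rw [pd, (hderiv.congr_of_eventuallyEq hF).deriv, Fser_eq_tsum_Fterm, ← tsum_mul_left]
  exact tsum_congr fun m => (mul_Fterm_update_sub_one α γ a b k m (hx _).ne').symm

/-- down-step contiguity for the series solution:
`∂F(α;x)/∂x_{1k} = α_k · F(α − e_k; x)` on `U₀`. -/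
theorem stmt19 {n : ℕ} (hn : 1 ≤ n) (α : Fin n → ℂ) (γ : ℂ) (a b : ℝ)
    (ha : 0 < a) (hab : a < b) (hγ : ∀ j : ℕ, γ ≠ -((j : ℂ) + 1))
    (k : Fin n) (x : (Fin 2 × Fin n) → ℝ) (hx : ∀ p, 0 < x p)
    (hU : ∀ l, x (1, l) * b < x (0, l)) :
    pd (0, k) (Fser α γ a b) x
      = α k * Fser (Function.update α k (α k - 1)) γ a b x :=
  stmt19_general α γ a b ha hab k x hx hU
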